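/- The map ψ(r,θ) = (r cos θ, r sin 2θ, −2r, r(sin θ − (1/3)sin³θ)) from ℝ² (polar coordinates interpretation: here (r,θ) ∈ ℝ_{>0} × ℝ) to ℝ⁴ satisfies ψ*ω = 0 where ω = dx∧dy + dt∧dz, i.e., ψ is an isotropic (Lagrangian) map. -/

import Mathlib

/-- Evaluation of the symplectic form `ω = dx∧dy + dt∧dz` on `ℝ⁴`
(coordinates `(x,y,t,z)`). -/
def omegaEval (u v : ℝ × ℝ × ℝ × ℝ) : ℝ :=
  u.1 * v.2.1 - u.2.1 * v.1 + u.2.2.1 * v.2.2.2 - u.2.2.2 * v.2.2.1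

/-- The map `ψ(r,θ) = (r cos θ, r sin 2θ, −2r, r(sin θ − sin³θ/3))`. -/
noncomputable def psi (p : ℝ × ℝ) : ℝ × ℝ × ℝ × ℝ :=
  (p.1 * Real.cos p.2, p.1 * Real.sin (2 * p.2), -2 * p.1,
    p.1 * (Real.sin p.2 - (1 / 3) * Real.sin p.2 ^ 3))

/-!
`ψ(r, θ) = r • γ(θ)` is the cone over the curve
`γ(θ) = (cos θ, sin 2θ, −2, sin θ − sin³θ/3)`. Since `dψ = γ dr + r γ' dθ` and `ω` is alternating,
`ψ*ω = r ω(γ, γ') dr ∧ dθ`, so `ψ` is isotropic as soon as `ω(γ, γ') = 0` along the curve; here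
`ω(γ, γ') = 2 cos θ cos 2θ + 2 sin²θ cos θ − 2 cos³θ = 0`.
-/

open Real

theorem fderiv_fst_smul_comp_snd_apply {E : Type*} [NormedAddCommGroup E] [NormedSpace ℝ E]
    {γ : ℝ → E} {γ' : E} {p : ℝ × ℝ} (hγ : HasDerivAt γ γ' p.2) (u : ℝ × ℝ) :
    fderiv ℝ (fun q : ℝ × ℝ => q.1 • γ q.2) p u = u.1 • γ p.2 + (p.1 * u.2) • γ' := by
  have hcone : HasFDerivAt (fun q : ℝ × ℝ => q.1 • γ q.2) _ p :=
    hasFDerivAt_fst.smul (hγ.hasFDerivAt.comp p hasFDerivAt_snd)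
  rw [hcone.fderiv]
  simp [smul_smul, add_comm]

theorem omegaEval_smul_add_smul (a b c d : ℝ) (x y : ℝ × ℝ × ℝ × ℝ) :
    omegaEval (a • x + b • y) (c • x + d • y) = (a * d - b * c) * omegaEval x y := by
  simp only [omegaEval, Prod.fst_add, Prod.snd_add, Prod.smul_fst, Prod.smul_snd, smul_eq_mul]
  ring

noncomputable def psiCurve (θ : ℝ) : ℝ × ℝ × ℝ × ℝ :=
  (cos θ, sin (2 * θ), -2, sin θ - (1 / 3) * sin θ ^ 3)

theorem psi_eq_smul_psiCurve : psi = fun p => p.1 • psiCurve p.2 := by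
  ext p <;> simp [psi, psiCurve, mul_comm]

theorem hasDerivAt_psiCurve (θ : ℝ) :
    HasDerivAt psiCurve (-sin θ, 2 * cos (2 * θ), 0, cos θ ^ 3) θ := by
  have h₂ : HasDerivAt (fun x => sin (2 * x)) (2 * cos (2 * θ)) θ := by
    simpa [mul_comm] using ((hasDerivAt_id θ).const_mul 2).sin
  have h₄ : HasDerivAt (fun x => sin x - 1 / 3 * sin x ^ 3) (cos θ ^ 3) θ := by
    refine ((hasDerivAt_sin θ).sub (((hasDerivAt_sin θ).pow 3).const_mul (1 / 3))).congr_deriv ?_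
    linear_combination (-cos θ) * sin_sq_add_cos_sq θ
  exact (hasDerivAt_cos θ).prodMk (h₂.prodMk ((hasDerivAt_const θ _).prodMk h₄))

theorem omegaEval_psiCurve_deriv (θ : ℝ) :
    omegaEval (psiCurve θ) (-sin θ, 2 * cos (2 * θ), 0, cos θ ^ 3) = 0 := by
  simp only [omegaEval, psiCurve, sin_two_mul, cos_two_mul]
  linear_combination (2 * cos θ) * sin_sq_add_cos_sq θ

/-- `ψ*ω = 0` on `ℝ_{>0} × ℝ`: `ψ` is an isotropic (Lagrangian) map. -/
theorem psi_isotropic :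
    ∀ p : ℝ × ℝ, 0 < p.1 →
      ∀ u v : ℝ × ℝ, omegaEval (fderiv ℝ psi p u) (fderiv ℝ psi p v) = 0 := by
  intro p _ u v
  simp only [psi_eq_smul_psiCurve, fderiv_fst_smul_comp_snd_apply (hasDerivAt_psiCurve p.2)]
  rw [omegaEval_smul_add_smul, omegaEval_psiCurve_deriv, mul_zero]
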